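/- arXiv:1807.02889 — 2 statements merged into one kernel-verified Lean document; each statement's English description precedes it below -/
import Mathlib

section
/- Assume N ≥ 3. Then the polynomial P_{−Size_3(Y)}(ζ) = Σ_{σ : α(σ) = −Size_3(Y)} p^{[σ]}(ζ) is not identically zero; that is, −Size_3(Y) is a frequency of the modified characteristic determinant D(ζ) = (−4π)^N det Γ_{a,Y}(iζ). -/
/-!
Among the permutations of frequency `b = −Size₃(Y)`, let `m` be the least number of moved points.
Every such `σ` has `m` moved points or more, so `p^{[σ]}` has degree at most `N − m`, and
`P_b` has coefficient `(−1)^{N−m} Σ ε_σ K₁(σ)` in degree `N − m`, the sum running over the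
`σ` of frequency `b` with exactly `m` moved points. Since `b < 0`, `m ≥ 2`; and a permutation
realising `Size₃` shows `m ≤ 3`. Permutations with two moved points are transpositions and those
with three are three-cycles, so all `ε_σ` in the sum agree, while every `K₁(σ)` is positive.
-/

open Complex Real Filter Topology

noncomputable section

abbrev Pt := EuclideanSpace ℝ (Fin 3)

/-- Diameter of the tuple `Y`. -/
def diamY {N : ℕ} (Y : Fin N → Pt) : ℝ :=
  ⨆ p : Fin N × Fin N, dist (Y p.1) (Y p.2)

/-- Number of non-fixed points of a permutation. -/
def movedCard {N : ℕ} (σ : Equiv.Perm (Fin N)) : ℕ :=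
  (Finset.univ.filter fun j => σ j ≠ j).card

/-- The `m`-size of `Y`. -/
def SizeM {N : ℕ} (Y : Fin N → Pt) (m : ℕ) : ℝ :=
  if m = 1 then diamY Y
  else ⨆ σ : {σ : Equiv.Perm (Fin N) // movedCard σ = m}, ∑ j, dist (Y j) (Y (σ.1 j))

/-- The frequency `α(σ)`. -/
def alphaY {N : ℕ} (Y : Fin N → Pt) (σ : Equiv.Perm (Fin N)) : ℝ :=
  -∑ j ∈ Finset.univ.filter fun j => σ j ≠ j, dist (Y j) (Y (σ j))

/-- The constant `K₁(σ)`. -/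
def K1 {N : ℕ} (Y : Fin N → Pt) (σ : Equiv.Perm (Fin N)) : ℝ :=
  ∏ j ∈ Finset.univ.filter fun j => σ j ≠ j, (dist (Y j) (Y (σ j)))⁻¹

/-- The polynomial `p^{[σ]}`. -/
def pPoly {N : ℕ} (Y : Fin N → Pt) (a : Fin N → ℂ) (σ : Equiv.Perm (Fin N)) : Polynomial ℂ :=
  Polynomial.C (((Equiv.Perm.sign σ : ℤ) : ℂ) * (K1 Y σ : ℂ)) *
    ∏ j ∈ Finset.univ.filter fun j => σ j = j,
      (-Polynomial.X - Polynomial.C (4 * (π : ℂ) * a j))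

open scoped Classical in
/-- The polynomial `P_b`. -/
def Pb {N : ℕ} (Y : Fin N → Pt) (a : Fin N → ℂ) (b : ℝ) : Polynomial ℂ :=
  ∑ σ ∈ Finset.univ.filter fun σ => alphaY Y σ = b, pPoly Y a σ

open scoped Classical in
/-- The regularized Green function kernel. -/
def Gtil (z : ℂ) (x : Pt) : ℂ :=
  if x = 0 then 0 else Complex.exp (Complex.I * z * ‖x‖) / (4 * (π : ℂ) * ‖x‖)

/-- The characteristic matrix `Γ_{a,Y}(z)`. -/
def GammaM {N : ℕ} (a : Fin N → ℂ) (Y : Fin N → Pt) (z : ℂ) : Matrix (Fin N) (Fin N) ℂ :=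
  Matrix.of fun j j' =>
    (if j = j' then a j - Complex.I * z / (4 * (π : ℂ)) else 0) - Gtil z (Y j - Y j')

/-- The characteristic determinant. -/
def detGamma {N : ℕ} (a : Fin N → ℂ) (Y : Fin N → Pt) (z : ℂ) : ℂ :=
  (GammaM a Y z).det

open scoped Classical in
/-- The order of `z` as a zero of `f`. -/
def zeroOrder (f : ℂ → ℂ) (z : ℂ) : ℕ :=
  if h : AnalyticAt ℂ f z then (analyticOrderAt f z).toNat else 0

/-- Number of zeros of `f` in `S`, counted with multiplicities. -/
def countZeros (f : ℂ → ℂ) (S : Set ℂ) : ℝ :=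
  ∑' k : ℂ, S.indicator (fun k => (zeroOrder f k : ℝ)) k

/-- The logarithmic-strip counting function `N^log(μ, R)`. -/
def NlogCount (f : ℂ → ℂ) (μ R : ℝ) : ℝ :=
  countZeros f {k | -μ * Real.log (|k.re| + 1) ≤ k.im ∧ ‖k‖ ≤ R}

/-- The counting function `N(R)`. -/
def NCount (f : ℂ → ℂ) (R : ℝ) : ℝ :=
  countZeros f {k | ‖k‖ ≤ R}

open Finset Polynomial Equiv

lemma prod_neg_X_sub_C {R ι : Type*} [CommRing R] (s : Finset ι) (c : ι → R) :
    ∏ j ∈ s, (-X - C (c j)) = C ((-1) ^ #s) * ∏ j ∈ s, (X - C (-c j)) := by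
  rw [C_pow, ← prod_const, ← prod_mul_distrib]
  refine prod_congr rfl fun j _ => ?_
  rw [C_neg, C_1, C_neg]
  ring

lemma card_fixed_eq {α : Type*} [Fintype α] [DecidableEq α] (σ : Perm α) :
    #(univ.filter fun j => σ j = j) = Fintype.card α - #σ.support := by
  rw [← card_univ, ← card_filter_add_card_filter_not (s := univ) (fun j => σ j = j)]
  simp only [ne_eq, Perm.support, Nat.add_sub_cancel]

lemma exists_card_support_eq {N m : ℕ} (h2 : 2 ≤ m) (hmN : m ≤ N) :
    ∃ σ : Perm (Fin N), #σ.support = m := by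
  have : NeZero N := ⟨by omega⟩
  refine ⟨Fin.cycleRange ⟨m - 1, by omega⟩, ?_⟩
  rw [← Perm.sum_cycleType, Fin.cycleType_cycleRange (by simp [Fin.ext_iff]; omega)]
  simp only [Multiset.sum_singleton]
  omega

section

variable {N : ℕ} {Y : Fin N → Pt}

lemma movedCard_eq_card_support (σ : Perm (Fin N)) : movedCard σ = #σ.support := rfl

lemma card_fixed_eq_sub (σ : Perm (Fin N)) :
    #(univ.filter fun j => σ j = j) = N - #σ.support := by
  simpa using card_fixed_eq σ

lemma pPoly_eq (a : Fin N → ℂ) (σ : Perm (Fin N)) :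
    pPoly Y a σ = C ((Perm.sign σ : ℤ) * (K1 Y σ : ℂ) * (-1) ^ (N - #σ.support)) *
      ∏ j ∈ univ.filter (fun j => σ j = j), (X - C (-(4 * (π : ℂ) * a j))) := by
  rw [pPoly, prod_neg_X_sub_C, card_fixed_eq_sub, ← mul_assoc, ← C_mul]

lemma natDegree_pPoly_le (a : Fin N → ℂ) (σ : Perm (Fin N)) :
    (pPoly Y a σ).natDegree ≤ N - #σ.support := by
  rw [pPoly_eq, ← card_fixed_eq_sub,
    ← natDegree_finsetProd_X_sub_C_eq_card (R := ℂ) _ fun j => -(4 * (π : ℂ) * a j)]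
  exact natDegree_C_mul_le _ _

lemma coeff_pPoly (a : Fin N → ℂ) (σ : Perm (Fin N)) :
    (pPoly Y a σ).coeff (N - #σ.support) =
      (Perm.sign σ : ℤ) * (K1 Y σ : ℂ) * (-1) ^ (N - #σ.support) := by
  rw [pPoly_eq, coeff_C_mul, ← card_fixed_eq_sub,
    ← natDegree_finsetProd_X_sub_C_eq_card (R := ℂ) _ fun j => -(4 * (π : ℂ) * a j),
    (monic_prod_X_sub_C _ _).coeff_natDegree, mul_one]

lemma K1_pos (hY : Function.Injective Y) (σ : Perm (Fin N)) : 0 < K1 Y σ :=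
  prod_pos fun _ hj => inv_pos.mpr <| dist_pos.mpr fun h => (mem_filter.mp hj).2 (hY h).symm

lemma alphaY_eq_neg_sum (Y : Fin N → Pt) (σ : Perm (Fin N)) :
    alphaY Y σ = -∑ j, dist (Y j) (Y (σ j)) := by
  rw [alphaY, sum_filter_of_ne fun _ _ h => ?_]
  contrapose! h
  rw [h, dist_self]

lemma alphaY_one (Y : Fin N → Pt) : alphaY Y 1 = 0 := by
  simp [alphaY_eq_neg_sum]

lemma alphaY_neg (hY : Function.Injective Y) {σ : Perm (Fin N)} (hσ : σ ≠ 1) :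
    alphaY Y σ < 0 := by
  obtain ⟨j, hj⟩ : ∃ j, σ j ≠ j := by simpa [Equiv.ext_iff] using hσ
  rw [alphaY_eq_neg_sum, neg_lt_zero]
  exact sum_pos' (fun _ _ => dist_nonneg) ⟨j, mem_univ _, dist_pos.mpr fun h => hj (hY h).symm⟩

lemma exists_alphaY_eq_neg_SizeM (Y : Fin N → Pt) {m : ℕ} (hm : m ≠ 1)
    (h : ∃ σ : Perm (Fin N), movedCard σ = m) :
    ∃ σ : Perm (Fin N), movedCard σ = m ∧ alphaY Y σ = -SizeM Y m := by
  obtain ⟨σ₀, hσ₀⟩ := h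
  have : Nonempty {σ : Perm (Fin N) // movedCard σ = m} := ⟨⟨σ₀, hσ₀⟩⟩
  obtain ⟨⟨σ, hσ⟩, hmax⟩ := exists_eq_ciSup_of_finite
    (f := fun σ : {σ : Perm (Fin N) // movedCard σ = m} => ∑ j, dist (Y j) (Y (σ.1 j)))
  exact ⟨σ, hσ, by rw [alphaY_eq_neg_sum, SizeM, if_neg hm, ← hmax]⟩

open scoped Classical in
lemma coeff_Pb (a : Fin N → ℂ) (b : ℝ) {m : ℕ}
    (hlow : ∀ σ : Perm (Fin N), alphaY Y σ = b → m ≤ #σ.support) :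
    (Pb Y a b).coeff (N - m) = (-1) ^ (N - m) *
      ∑ σ ∈ univ.filter (fun σ => alphaY Y σ = b ∧ #σ.support = m),
        (Perm.sign σ : ℤ) * (K1 Y σ : ℂ) := by
  rw [Pb, finsetSum_coeff, ← sum_filter_of_ne (p := fun σ => #σ.support = m), filter_filter,
    mul_sum]
  · refine sum_congr rfl fun σ hσ => ?_
    rw [← (mem_filter.mp hσ).2.2, coeff_pPoly]
    ring
  · intro σ hσ hcoeff
    by_contra hne
    have hlt : m < #σ.support := (hlow σ (mem_filter.mp hσ).2).lt_of_ne' hne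
    have hN : #σ.support ≤ N := by simpa using card_le_univ σ.support
    exact hcoeff (coeff_eq_zero_of_natDegree_lt ((natDegree_pPoly_le a σ).trans_lt (by omega)))

open scoped Classical in
lemma Pb_ne_zero_of_sign_eq (hY : Function.Injective Y) (a : Fin N → ℂ) {b : ℝ} {m : ℕ}
    (s : ℤˣ) (hlow : ∀ σ : Perm (Fin N), alphaY Y σ = b → m ≤ #σ.support)
    (hsign : ∀ σ : Perm (Fin N), alphaY Y σ = b → #σ.support = m → Perm.sign σ = s)
    (hex : ∃ σ : Perm (Fin N), alphaY Y σ = b ∧ #σ.support = m) :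
    Pb Y a b ≠ 0 := by
  set S := univ.filter fun σ : Perm (Fin N) => alphaY Y σ = b ∧ #σ.support = m
  have hcoeff : (Pb Y a b).coeff (N - m) =
      (-1) ^ (N - m) * (s : ℤ) * ((∑ σ ∈ S, K1 Y σ : ℝ) : ℂ) := by
    rw [coeff_Pb a b hlow, mul_assoc, ofReal_sum, Finset.mul_sum S _ ((s : ℤ) : ℂ)]
    refine congrArg _ (Finset.sum_congr rfl fun σ hσ => ?_)
    rw [hsign σ (mem_filter.mp hσ).2.1 (mem_filter.mp hσ).2.2]
  have hK : 0 < ∑ σ ∈ S, K1 Y σ := by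
    obtain ⟨σ, hσ⟩ := hex
    exact Finset.sum_pos (fun τ _ => K1_pos hY τ) ⟨σ, mem_filter.mpr ⟨mem_univ _, hσ⟩⟩
  intro h
  rw [h, coeff_zero] at hcoeff
  refine (mul_ne_zero (mul_ne_zero (pow_ne_zero _ (by norm_num)) ?_) ?_) hcoeff.symm
  · exact_mod_cast s.ne_zero
  · exact_mod_cast hK.ne'

end

/-- for `N ≥ 3`, `−Size₃(Y)` is a frequency of `D`, i.e. the polynomial
`P_{−Size₃(Y)}` is not identically zero. -/
theorem statement1 {N : ℕ} (hN : 3 ≤ N) (Y : Fin N → Pt) (hY : Function.Injective Y)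
    (a : Fin N → ℂ) :
    Pb Y a (-(SizeM Y 3)) ≠ 0 := by
  obtain ⟨σ₀, hσ₀, hα₀⟩ :=
    exists_alphaY_eq_neg_SizeM Y (by norm_num) (exists_card_support_eq (by norm_num) hN)
  rw [movedCard_eq_card_support] at hσ₀
  have hσ₀_ne_one : σ₀ ≠ 1 := by
    rintro rfl
    simp at hσ₀
  have hlow : ∀ σ, alphaY Y σ = -SizeM Y 3 → 2 ≤ #σ.support := fun σ hσ =>
    Perm.two_le_card_support_of_ne_one fun h1 =>
      (alphaY_neg hY hσ₀_ne_one).ne (by rw [hα₀, ← hσ, h1, alphaY_one])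
  by_cases hswap : ∃ σ, alphaY Y σ = -SizeM Y 3 ∧ #σ.support = 2
  · exact Pb_ne_zero_of_sign_eq hY a (-1) hlow
      (fun σ _ h => (Perm.card_support_eq_two.mp h).sign_eq) hswap
  · refine Pb_ne_zero_of_sign_eq hY a 1 (fun σ hσ => ?_)
      (fun σ _ h => (card_support_eq_three_iff.mp h).sign) ⟨σ₀, hα₀, hσ₀⟩
    have h2 : #σ.support ≠ 2 := fun h => hswap ⟨σ, hσ, h⟩
    have := hlow σ hσ
    omega
end
end

section
/- Let N ≥ 3 and let y_1, …, y_N be pairwise distinct points of ℝ³. If all the points y_1, …, y_N lie on one line, then Size_3(Y) = Size_2(Y); otherwise Size_3(Y) > Size_2(Y). -/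
open Complex Real Filter Topology

noncomputable section

/-!
A permutation moving exactly two points is a transposition, whose displacement sum is twice a
distance, so `Size₂ = 2 diam`. A permutation moving exactly three points is a 3-cycle, whose sum
is the perimeter of a triangle. Three collinear points have perimeter twice their largest
distance, so then `Size₃ ≤ 2 diam`. Conversely, completing a diameter pair to a triangle gives
perimeter `≥ 2 diam` by the triangle inequality, strictly when the third point can be taken off
the line through the pair, which is possible exactly when the points are not collinear.
-/

open Equiv Equiv.Perm Finset

theorem dist_add_dist_add_dist_le_of_collinear {V P : Type*} [SeminormedAddCommGroup V]
    [NormedSpace ℝ V] [PseudoMetricSpace P] [NormedAddTorsor V P] {a b c : P} {M : ℝ}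
    (h : Collinear ℝ ({a, b, c} : Set P)) (hab : dist a b ≤ M) (hbc : dist b c ≤ M)
    (hca : dist c a ≤ M) : dist a b + dist b c + dist c a ≤ 2 * M := by
  rcases h.wbtw_or_wbtw_or_wbtw with h | h | h <;>
    linarith [h.dist_add_dist, dist_comm a b, dist_comm b c, dist_comm c a]

theorem collinear_range_of_forall_collinear_triple {k V P ι : Type*} [Field k] [AddCommGroup V]
    [Module k V] [AddTorsor V P] (Y : ι → P) {i j : ι} (hij : Y i ≠ Y j)
    (h : ∀ l, Collinear k ({Y i, Y j, Y l} : Set P)) : Collinear k (Set.range Y) := by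
  rw [collinear_iff_of_mem (Set.mem_range_self i)]
  refine ⟨Y j -ᵥ Y i, ?_⟩
  rintro _ ⟨l, rfl⟩
  obtain ⟨r, hr⟩ := mem_affineSpan_pair_iff_exists_lineMap_eq.1
    ((h l).mem_affineSpan_of_mem_of_ne (p₃ := Y l) (by simp) (by simp) (by simp) hij)
  exact ⟨r, by rw [← hr, AffineMap.lineMap_apply]⟩

section PermDisplacement

variable {α E : Type*} [Fintype α] [DecidableEq α] [PseudoMetricSpace E] (Y : α → E)

theorem sum_dist_perm_eq_sum_support (σ : Perm α) :
    ∑ j, dist (Y j) (Y (σ j)) = ∑ j ∈ σ.support, dist (Y j) (Y (σ j)) := by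
  refine (sum_subset (subset_univ _) fun j _ hj => ?_).symm
  rw [notMem_support.1 hj, dist_self]

theorem sum_dist_perm_le_card_support_mul (σ : Perm α) {M : ℝ}
    (hM : ∀ i j, dist (Y i) (Y j) ≤ M) : ∑ j, dist (Y j) (Y (σ j)) ≤ #σ.support * M := by
  rw [sum_dist_perm_eq_sum_support, ← nsmul_eq_mul]
  exact sum_le_card_nsmul _ _ _ fun j _ => hM j (σ j)

theorem sum_dist_swap {x y : α} (hxy : x ≠ y) :
    ∑ j, dist (Y j) (Y (swap x y j)) = 2 * dist (Y x) (Y y) := by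
  rw [sum_dist_perm_eq_sum_support, support_swap hxy, sum_pair hxy, swap_apply_left,
    swap_apply_right, dist_comm (Y y)]
  ring

theorem Equiv.Perm.IsThreeCycle.sum_dist_apply {σ : Perm α} (hσ : σ.IsThreeCycle) {a : α}
    (ha : a ∈ σ.support) :
    ∑ j, dist (Y j) (Y (σ j)) =
      dist (Y a) (Y (σ a)) + dist (Y (σ a)) (Y (σ (σ a))) + dist (Y (σ (σ a))) (Y a) := by
  have hnodup := hσ.nodup_iff_mem_support.2 ha
  simp only [List.nodup_cons, List.mem_cons, List.not_mem_nil, List.nodup_nil, not_or,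
    not_false_eq_true, and_true] at hnodup
  obtain ⟨⟨h01, h02⟩, h12⟩ := hnodup
  have hcube : σ (σ (σ a)) = a := by
    have h3 : (σ ^ 3) a = a := by rw [← hσ.orderOf, pow_orderOf_eq_one, one_apply]
    simpa [pow_succ] using h3
  rw [sum_dist_perm_eq_sum_support, hσ.support_eq_iff_mem_support.2 ha,
    sum_insert (by simp [h01, h02]), sum_pair h12, hcube, add_assoc]

end PermDisplacement

section SizeM

variable {N : ℕ} (Y : Fin N → Pt)

theorem dist_le_diamY (i j : Fin N) : dist (Y i) (Y j) ≤ diamY Y :=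
  le_ciSup (f := fun p : Fin N × Fin N => dist (Y p.1) (Y p.2)) (Set.finite_range _).bddAbove
    (i, j)

theorem exists_ne_dist_eq_diamY (hN : 2 ≤ N) :
    ∃ i j : Fin N, i ≠ j ∧ dist (Y i) (Y j) = diamY Y := by
  have : NeZero N := ⟨by omega⟩
  obtain ⟨⟨i, j⟩, hd⟩ : ∃ p : Fin N × Fin N, dist (Y p.1) (Y p.2) = diamY Y :=
    exists_eq_ciSup_of_finite
  by_cases hij : i = j
  · -- all distances vanish, so any pair of distinct indices is a diameter pair
    have hdiam : diamY Y = 0 := by rw [← hd, hij, dist_self]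
    have h01 : (⟨0, by omega⟩ : Fin N) ≠ ⟨1, by omega⟩ := by simp
    exact ⟨_, _, h01, le_antisymm (dist_le_diamY Y _ _) (hdiam ▸ dist_nonneg)⟩
  · exact ⟨i, j, hij, hd⟩

theorem le_sizeM {m : ℕ} (hm : m ≠ 1) {σ : Perm (Fin N)} (hσ : #σ.support = m) :
    ∑ j, dist (Y j) (Y (σ j)) ≤ SizeM Y m := by
  -- `movedCard σ` is `#σ.support` by definition of `Perm.support`
  rw [SizeM, if_neg hm]
  exact le_ciSup (f := fun τ : {τ : Perm (Fin N) // movedCard τ = m} =>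
    ∑ j, dist (Y j) (Y (τ.1 j))) (Set.finite_range _).bddAbove ⟨σ, hσ⟩

theorem sizeM_le {m : ℕ} (hm : m ≠ 1) (hne : ∃ σ : Perm (Fin N), #σ.support = m) {B : ℝ}
    (hB : ∀ σ : Perm (Fin N), #σ.support = m → ∑ j, dist (Y j) (Y (σ j)) ≤ B) :
    SizeM Y m ≤ B := by
  obtain ⟨σ, hσ⟩ := hne
  have : Nonempty {τ : Perm (Fin N) // movedCard τ = m} := ⟨⟨σ, hσ⟩⟩
  rw [SizeM, if_neg hm]
  exact ciSup_le fun τ => hB τ.1 τ.2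

theorem sizeM_two (hN : 2 ≤ N) : SizeM Y 2 = 2 * diamY Y := by
  obtain ⟨i, j, hij, hd⟩ := exists_ne_dist_eq_diamY Y hN
  apply le_antisymm
  · refine sizeM_le Y (by norm_num) ⟨_, card_support_swap hij⟩ fun σ hσ => ?_
    simpa [hσ] using sum_dist_perm_le_card_support_mul Y σ (dist_le_diamY Y)
  · simpa [sum_dist_swap Y hij, hd] using le_sizeM Y (by norm_num) (card_support_swap hij)

theorem le_sizeM_three {i j k : Fin N} (hij : i ≠ j) (hik : i ≠ k) (hjk : j ≠ k) :
    dist (Y i) (Y k) + dist (Y k) (Y j) + dist (Y j) (Y i) ≤ SizeM Y 3 := by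
  have hσ := isThreeCycle_swap_mul_swap_same hij hik hjk
  have hi : i ∈ (swap i j * swap i k).support := by
    simp [swap_apply_of_ne_of_ne hik.symm hjk.symm, hik.symm]
  convert le_sizeM Y (by norm_num) hσ.card_support using 1
  rw [hσ.sum_dist_apply Y hi]
  simp [swap_apply_of_ne_of_ne hik.symm hjk.symm]

theorem two_mul_diamY_le_sizeM_three (hN : 3 ≤ N) : 2 * diamY Y ≤ SizeM Y 3 := by
  obtain ⟨i, j, hij, hd⟩ := exists_ne_dist_eq_diamY Y (by omega)
  obtain ⟨k, hki, hkj⟩ := Fin.exists_ne_and_ne_of_two_lt i j (by omega)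
  calc 2 * diamY Y ≤ dist (Y i) (Y k) + dist (Y k) (Y j) + dist (Y j) (Y i) := by
        rw [← hd, dist_comm (Y j)]; linarith [dist_triangle (Y i) (Y k) (Y j)]
    _ ≤ SizeM Y 3 := le_sizeM_three Y hij hki.symm hkj.symm

theorem sizeM_three_le_of_collinear (hN : 3 ≤ N) (h : Collinear ℝ (Set.range Y)) :
    SizeM Y 3 ≤ 2 * diamY Y := by
  have h01 : (⟨0, by omega⟩ : Fin N) ≠ ⟨1, by omega⟩ := by simp
  have h02 : (⟨0, by omega⟩ : Fin N) ≠ ⟨2, by omega⟩ := by simp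
  have h12 : (⟨1, by omega⟩ : Fin N) ≠ ⟨2, by omega⟩ := by simp
  refine sizeM_le Y (by norm_num)
    ⟨_, (isThreeCycle_swap_mul_swap_same h01 h02 h12).card_support⟩ fun σ hσ => ?_
  have hσ3 := card_support_eq_three_iff.1 hσ
  obtain ⟨a, ha⟩ := card_pos.1 (hσ ▸ three_pos : 0 < #σ.support)
  rw [hσ3.sum_dist_apply Y ha]
  exact dist_add_dist_add_dist_le_of_collinear
    (h.subset (by simp [Set.insert_subset_iff])) (dist_le_diamY Y _ _) (dist_le_diamY Y _ _)
    (dist_le_diamY Y _ _)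

theorem two_mul_diamY_lt_sizeM_three_of_not_collinear (hN : 3 ≤ N)
    (h : ¬ Collinear ℝ (Set.range Y)) : 2 * diamY Y < SizeM Y 3 := by
  obtain ⟨i, j, hij, hd⟩ := exists_ne_dist_eq_diamY Y (by omega)
  have hYij : Y i ≠ Y j := by
    intro hYY
    refine h ((collinear_singleton ℝ (Y i)).subset ?_)
    rintro _ ⟨l, rfl⟩
    simpa [← hd, hYY] using dist_le_diamY Y l j
  obtain ⟨k, hk⟩ : ∃ k, ¬ Collinear ℝ ({Y i, Y j, Y k} : Set Pt) := by
    by_contra! hcol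
    exact h (collinear_range_of_forall_collinear_triple Y hYij hcol)
  have hik : i ≠ k := fun hik => ne₁₃_of_not_collinear hk (by rw [hik])
  have hjk : j ≠ k := fun hjk => ne₂₃_of_not_collinear hk (by rw [hjk])
  have hstrict : dist (Y i) (Y j) < dist (Y i) (Y k) + dist (Y k) (Y j) :=
    dist_lt_dist_add_dist_iff.2 fun hw => hk (by rw [Set.pair_comm]; exact hw.collinear)
  calc 2 * diamY Y < dist (Y i) (Y k) + dist (Y k) (Y j) + dist (Y j) (Y i) := by
        rw [← hd, dist_comm (Y j)]; linarith
    _ ≤ SizeM Y 3 := le_sizeM_three Y hij hik hjk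

end SizeM

theorem statement2_general {N : ℕ} (hN : 3 ≤ N) (Y : Fin N → Pt) :
    (Collinear ℝ (Set.range Y) → SizeM Y 3 = SizeM Y 2) ∧
    (¬ Collinear ℝ (Set.range Y) → SizeM Y 3 > SizeM Y 2) := by
  rw [sizeM_two Y (by omega)]
  exact ⟨fun h => le_antisymm (sizeM_three_le_of_collinear Y hN h)
      (two_mul_diamY_le_sizeM_three Y hN),
    two_mul_diamY_lt_sizeM_three_of_not_collinear Y hN⟩

/-- if all points of `Y` lie on one line then `Size₃(Y) = Size₂(Y)`,
otherwise `Size₃(Y) > Size₂(Y)`. -/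
theorem statement2 {N : ℕ} (hN : 3 ≤ N) (Y : Fin N → Pt) (hY : Function.Injective Y) :
    (Collinear ℝ (Set.range Y) → SizeM Y 3 = SizeM Y 2) ∧
    (¬ Collinear ℝ (Set.range Y) → SizeM Y 3 > SizeM Y 2) :=
  statement2_general hN Y
end
end
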